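/- arXiv:1112.2351 — 4 statements merged into one kernel-verified Lean document; each statement's English description precedes it below -/
import Mathlib

section
/- Let p, r : [0,1] → ℝ be continuous with p(x) > 0 and r(x) > 0 for all x ∈ [0,1]. Let y be a nontrivial classical solution of (p·y'')'' − r·y = 0 on [0,1] (i.e. y ∈ C²([0,1],ℝ), p·y'' ∈ C²([0,1],ℝ), not identically zero, and (p·y'')''(x) = r(x)·y(x) for all x). If for some a ∈ [0,1) one has y(a) ≥ 0, y'(a) ≥ 0, y''(a) ≥ 0 and (p·y'')'(a) ≥ 0, then y(1) > 0, y'(1) > 0, y''(1) > 0 and (p·y'')'(1) > 0. -/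
open Set

/-- Derivative within the interval `[0,1]`. -/
noncomputable def Dv (y : ℝ → ℝ) : ℝ → ℝ := derivWithin y (Set.Icc 0 1)

/-!
With `u = p y''`, the vector `Y = (y, y', u, u')` solves the linear system `Y' = A Y`, where the
only nonzero entries of `A` are `A 0 1 = 1`, `A 1 2 = 1 / p`, `A 2 3 = 1` and `A 3 0 = r`, all
positive. For such a cooperative system, Grönwall's inequality applied to `∫ ‖Y⁻‖` shows that
`Y ≥ 0` persists forward from `a`. Backward uniqueness for `Y' = A Y` rules out `Y 1 = 0`, since
`y` is nontrivial. Finally, if `Y 1 (i + 1) > 0` then `Y i` has a positive derivative near `1`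
and so `Y 1 i > Y a i ≥ 0`; going around the cycle, every component of `Y 1` is positive.
-/

open Filter Matrix

section Calculus

variable {a b : ℝ}

lemma hasDerivWithinAt_integral_Icc {N : ℝ → ℝ} (hN : ContinuousOn N (Icc a b)) {t : ℝ}
    (ht : t ∈ Icc a b) : HasDerivWithinAt (fun u => ∫ s in a..u, N s) (N t) (Icc a b) t := by
  have : Fact (t ∈ Icc a b) := ⟨ht⟩
  exact intervalIntegral.integral_hasDerivWithinAt_right
    (hN.mono (uIcc_subset_Icc (left_mem_Icc.2 (ht.1.trans ht.2)) ht)).intervalIntegrable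
    (hN.stronglyMeasurableAtFilter_nhdsWithin measurableSet_Icc t) (hN t ht)

lemma integral_eq_zero_of_le_mul_integral {N : ℝ → ℝ} {K : ℝ} (hN : ContinuousOn N (Icc a b))
    (hN0 : ∀ t ∈ Icc a b, 0 ≤ N t) (hle : ∀ t ∈ Icc a b, N t ≤ K * ∫ s in a..t, N s) :
    ∀ t ∈ Icc a b, ∫ s in a..t, N s = 0 := by
  refine eq_zero_of_abs_deriv_le_mul_abs_self_of_eq_zero_right (f' := N) (K := K)
    (fun t ht => (hasDerivWithinAt_integral_Icc hN ht).continuousWithinAt) (fun t ht => ?_)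
    intervalIntegral.integral_same (fun t ht => ?_)
  · exact (hasDerivWithinAt_integral_Icc hN (Ico_subset_Icc_self ht)).mono_of_mem_nhdsWithin
      (mem_of_superset (Ico_mem_nhdsGE ht.2) fun s hs => ⟨ht.1.trans hs.1, hs.2.le⟩)
  · have ht' := Ico_subset_Icc_self ht
    have hG : 0 ≤ ∫ s in a..t, N s :=
      intervalIntegral.integral_nonneg ht.1 fun s hs => hN0 s ⟨hs.1, hs.2.trans ht'.2⟩
    rw [Real.norm_of_nonneg (hN0 t ht'), Real.norm_of_nonneg hG]
    exact hle t ht'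

lemma monotoneOn_Icc_of_hasDerivWithinAt_nonneg {f f' : ℝ → ℝ}
    (hf : ∀ t ∈ Icc a b, HasDerivWithinAt f (f' t) (Icc a b) t) (hf' : ∀ t ∈ Ioo a b, 0 ≤ f' t) :
    MonotoneOn f (Icc a b) := by
  refine monotoneOn_of_hasDerivWithinAt_nonneg (convex_Icc a b)
    (fun t ht => (hf t ht).continuousWithinAt) (fun t ht => ?_) (by rwa [interior_Icc])
  rw [interior_Icc] at ht ⊢
  exact (hf t (Ioo_subset_Icc_self ht)).mono Ioo_subset_Icc_self

lemma strictMonoOn_Icc_of_hasDerivWithinAt_pos {f f' : ℝ → ℝ}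
    (hf : ∀ t ∈ Icc a b, HasDerivWithinAt f (f' t) (Icc a b) t) (hf' : ∀ t ∈ Ioo a b, 0 < f' t) :
    StrictMonoOn f (Icc a b) := by
  refine strictMonoOn_of_hasDerivWithinAt_pos (convex_Icc a b)
    (fun t ht => (hf t ht).continuousWithinAt) (fun t ht => ?_) (by rwa [interior_Icc])
  rw [interior_Icc] at ht ⊢
  exact (hf t (Ioo_subset_Icc_self ht)).mono Ioo_subset_Icc_self

lemma lt_of_hasDerivWithinAt_nonneg_of_pos_right {f f' : ℝ → ℝ} (hab : a < b)
    (hf : ∀ t ∈ Icc a b, HasDerivWithinAt f (f' t) (Icc a b) t)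
    (hf'c : ContinuousWithinAt f' (Icc a b) b) (hf' : ∀ t ∈ Ioo a b, 0 ≤ f' t) (hb : 0 < f' b) :
    f a < f b := by
  obtain ⟨l, hlb, hl⟩ : ∃ l ∈ Iio b, Ioc l b ⊆ {t | 0 < f' t} := by
    rw [← mem_nhdsLE_iff_exists_Ioc_subset, ← nhdsWithin_Icc_eq_nhdsLE hab]
    exact hf'c.eventually_const_lt hb
  set c := max a l
  have hc : c ∈ Icc a b := ⟨le_max_left _ _, max_le hab.le hlb.le⟩
  have hcb : c < b := max_lt hab hlb
  have hsub : Icc c b ⊆ Icc a b := Icc_subset_Icc_left hc.1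
  calc f a ≤ f c := monotoneOn_Icc_of_hasDerivWithinAt_nonneg hf hf' (left_mem_Icc.2 hab.le) hc hc.1
    _ < f b :=
      strictMonoOn_Icc_of_hasDerivWithinAt_pos (fun t ht => (hf t (hsub ht)).mono hsub)
        (fun t ht => hl ⟨(le_max_right _ _).trans_lt ht.1, ht.2.le⟩)
        (left_mem_Icc.2 hcb.le) (right_mem_Icc.2 hcb.le) hcb

end Calculus

section CooperativeSystem

attribute [local instance] Matrix.linftyOpNormedAddCommGroup

variable {ι : Type*} [Fintype ι] {a b : ℝ} {A : ℝ → Matrix ι ι ℝ} {Y : ℝ → ι → ℝ}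

lemma neg_norm_mul_norm_negPart_le_mulVec {M : Matrix ι ι ℝ} (hM : ∀ i j, 0 ≤ M i j)
    (v : ι → ℝ) (i : ι) : -(‖M‖ * ‖v⁻‖) ≤ (M *ᵥ v) i := by
  have hpos : 0 ≤ (M *ᵥ v⁺) i :=
    Finset.sum_nonneg fun j _ => mul_nonneg (hM i j) (posPart_nonneg (v j))
  have hneg : (M *ᵥ v⁻) i ≤ ‖M‖ * ‖v⁻‖ :=
    (le_abs_self _).trans ((norm_le_pi_norm _ i).trans (linfty_opNorm_mulVec M _))
  have hsplit : M *ᵥ v = M *ᵥ v⁺ - M *ᵥ v⁻ := by rw [← mulVec_sub, posPart_sub_negPart]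
  rw [hsplit, Pi.sub_apply]
  linarith

lemma exists_nonneg_bound_of_continuousOn_Icc (hA : ContinuousOn A (Icc a b)) :
    ∃ K, 0 ≤ K ∧ ∀ t ∈ Icc a b, ‖A t‖ ≤ K := by
  obtain ⟨K, hK⟩ := isCompact_Icc.exists_bound_of_continuousOn hA
  exact ⟨max K 0, le_max_right _ _, fun t ht => (hK t ht).trans (le_max_left _ _)⟩

theorem nonneg_of_hasDerivWithinAt_mulVec (hA : ContinuousOn A (Icc a b))
    (hA0 : ∀ t ∈ Icc a b, ∀ i j, 0 ≤ A t i j)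
    (hY : ∀ t ∈ Icc a b, HasDerivWithinAt Y (A t *ᵥ Y t) (Icc a b) t) (ha : 0 ≤ Y a) :
    ∀ t ∈ Icc a b, 0 ≤ Y t := by
  obtain ⟨K, hK0, hK⟩ := exists_nonneg_bound_of_continuousOn_Icc hA
  set N : ℝ → ℝ := fun t => ‖(Y t)⁻‖
  set G : ℝ → ℝ := fun t => ∫ s in a..t, N s
  have hYc : ContinuousOn Y (Icc a b) := fun t ht => (hY t ht).continuousWithinAt
  have hN : ContinuousOn N (Icc a b) := (continuousOn_pi.2 fun i =>
    ((continuous_apply i).comp_continuousOn hYc).neg.sup continuousOn_const).norm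
  have hG0 : ∀ t ∈ Icc a b, 0 ≤ G t := fun t ht =>
    intervalIntegral.integral_nonneg ht.1 fun s _ => norm_nonneg _
  have hYG : ∀ t ∈ Icc a b, ∀ i, -Y t i ≤ K * G t := by
    intro t ht i
    have hderiv : ∀ s ∈ Ioo a b, 0 ≤ (A s *ᵥ Y s) i + K * N s := fun s hs => by
      have hs' := Ioo_subset_Icc_self hs
      have hlow := neg_norm_mul_norm_negPart_le_mulVec (hA0 s hs') (Y s) i
      have hKN := mul_le_mul_of_nonneg_right (hK s hs') (norm_nonneg (Y s)⁻)
      linarith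
    have hmono := monotoneOn_Icc_of_hasDerivWithinAt_nonneg (f := fun s => Y s i + K * G s)
      (fun s hs => (hasDerivWithinAt_pi.1 (hY s hs) i).add
        ((hasDerivWithinAt_integral_Icc hN hs).const_mul K))
      hderiv (left_mem_Icc.2 (ht.1.trans ht.2)) ht ht.1
    have hGa : G a = 0 := intervalIntegral.integral_same
    simp only [hGa, mul_zero, add_zero] at hmono
    linarith [show 0 ≤ Y a i from ha i]
  have hG : ∀ t ∈ Icc a b, G t = 0 := by
    refine integral_eq_zero_of_le_mul_integral (K := K) hN (fun t _ => norm_nonneg _) fun t ht => ?_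
    refine (pi_norm_le_iff_of_nonneg (mul_nonneg hK0 (hG0 t ht))).2 fun i => ?_
    change ‖(Y t i)⁻‖ ≤ _
    rw [Real.norm_of_nonneg (negPart_nonneg _)]
    exact sup_le (hYG t ht i) (mul_nonneg hK0 (hG0 t ht))
  intro t ht i
  have := hYG t ht i
  rw [hG t ht, mul_zero] at this
  exact neg_nonpos.1 this

theorem eq_zero_of_hasDerivWithinAt_mulVec_of_eq_zero_right (hA : ContinuousOn A (Icc a b))
    (hY : ∀ t ∈ Icc a b, HasDerivWithinAt Y (A t *ᵥ Y t) (Icc a b) t) (hb : Y b = 0) :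
    ∀ t ∈ Icc a b, Y t = 0 := by
  obtain ⟨K, hK0, hK⟩ := exists_nonneg_bound_of_continuousOn_Icc hA
  have hlip : ∀ t ∈ Ioc a b, LipschitzOnWith K.toNNReal (A t *ᵥ ·) univ := by
    refine fun t ht => (LipschitzWith.of_dist_le_mul fun x y => ?_).lipschitzOnWith
    rw [dist_eq_norm, dist_eq_norm, ← mulVec_sub, Real.coe_toNNReal K hK0]
    exact (linfty_opNorm_mulVec _ _).trans
      (mul_le_mul_of_nonneg_right (hK t (Ioc_subset_Icc_self ht)) (norm_nonneg _))
  exact ODE_solution_unique_of_mem_Icc_left hlip (fun t ht => (hY t ht).continuousWithinAt)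
    (fun t ht => (hY t (Ioc_subset_Icc_self ht)).mono_of_mem_nhdsWithin (Icc_mem_nhdsLE_of_mem ht))
    (fun _ _ => mem_univ _) continuousOn_const
    (fun t _ => by simpa using hasDerivWithinAt_const t (Iic t) (0 : ι → ℝ))
    (fun _ _ => mem_univ _) hb

theorem pos_of_hasDerivWithinAt_mulVec_of_pos (hab : a < b) (hA : ContinuousOn A (Icc a b))
    (hA0 : ∀ t ∈ Icc a b, ∀ i j, 0 ≤ A t i j)
    (hY : ∀ t ∈ Icc a b, HasDerivWithinAt Y (A t *ᵥ Y t) (Icc a b) t)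
    (hY0 : ∀ t ∈ Icc a b, 0 ≤ Y t) {i j : ι} (hij : 0 < A b i j) (hj : 0 < Y b j) :
    0 < Y b i := by
  have hYc : ContinuousOn Y (Icc a b) := fun t ht => (hY t ht).continuousWithinAt
  have hterm : ∀ t ∈ Icc a b, ∀ k, 0 ≤ A t i k * Y t k := fun t ht k =>
    mul_nonneg (hA0 t ht i k) (hY0 t ht k)
  have hrow : ContinuousOn (fun t => (A t *ᵥ Y t) i) (Icc a b) :=
    continuousOn_finsetSum _ fun k _ =>
      ((continuous_apply k).comp_continuousOn ((continuous_apply i).comp_continuousOn hA)).mul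
        ((continuous_apply k).comp_continuousOn hYc)
  have hb : b ∈ Icc a b := right_mem_Icc.2 hab.le
  calc (0 : ℝ) ≤ Y a i := hY0 a (left_mem_Icc.2 hab.le) i
    _ < Y b i := lt_of_hasDerivWithinAt_nonneg_of_pos_right hab
      (fun t ht => hasDerivWithinAt_pi.1 (hY t ht) i) (hrow b hb)
      (fun t ht => Finset.sum_nonneg fun k _ => hterm t (Ioo_subset_Icc_self ht) k)
      ((mul_pos hij hj).trans_le
        (Finset.single_le_sum (fun k _ => hterm b hb k) (Finset.mem_univ j)))

end CooperativeSystem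

open Fin.NatCast in
lemma Fin.forall_of_succ_imp {n : ℕ} [NeZero n] {P : Fin n → Prop}
    (h : ∀ k, P (k + 1) → P k) {k : Fin n} (hk : P k) (i : Fin n) : P i := by
  have hback : ∀ m : ℕ, P (k - m) := by
    intro m
    induction m with
    | zero => simpa using hk
    | succ m ih => exact h _ (by rwa [Nat.cast_succ, sub_add_eq_sub_sub, sub_add_cancel])
  simpa using hback (k - i).val

section FourthOrder

lemma hasDerivWithinAt_Dv {f : ℝ → ℝ} {n : WithTop ℕ∞} (hf : ContDiffOn ℝ n f (Icc 0 1))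
    (hn : n ≠ 0) {t : ℝ} (ht : t ∈ Icc (0 : ℝ) 1) : HasDerivWithinAt f (Dv f t) (Icc 0 1) t :=
  ((hf.differentiableOn hn) t ht).hasDerivWithinAt

lemma contDiffOn_Dv {f : ℝ → ℝ} {n : WithTop ℕ∞} (hf : ContDiffOn ℝ (n + 1) f (Icc 0 1)) :
    ContDiffOn ℝ n (Dv f) (Icc 0 1) :=
  hf.derivWithin (uniqueDiffOn_Icc zero_lt_one) le_rfl

noncomputable def stateVec (p y : ℝ → ℝ) (t : ℝ) : Fin 4 → ℝ :=
  ![y t, Dv y t, p t * Dv (Dv y) t, Dv (fun s => p s * Dv (Dv y) s) t]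

noncomputable def coeffMatrix (p r : ℝ → ℝ) (t : ℝ) : Matrix (Fin 4) (Fin 4) ℝ :=
  !![0, 1, 0, 0; 0, 0, (p t)⁻¹, 0; 0, 0, 0, 1; r t, 0, 0, 0]

variable {p r y : ℝ → ℝ}

lemma continuousOn_coeffMatrix (hpc : ContinuousOn p (Icc 0 1)) (hrc : ContinuousOn r (Icc 0 1))
    (hp : ∀ x ∈ Icc (0:ℝ) 1, 0 < p x) : ContinuousOn (coeffMatrix p r) (Icc 0 1) := by
  have hpinv : ContinuousOn (fun t => (p t)⁻¹) (Icc 0 1) := hpc.inv₀ fun t ht => (hp t ht).ne'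
  refine continuousOn_pi.2 fun i => continuousOn_pi.2 fun j => ?_
  fin_cases i <;> fin_cases j <;> simp [coeffMatrix, continuousOn_const, hpinv, hrc]

lemma coeffMatrix_nonneg (hp : ∀ x ∈ Icc (0:ℝ) 1, 0 < p x) (hr : ∀ x ∈ Icc (0:ℝ) 1, 0 < r x) :
    ∀ t ∈ Icc (0:ℝ) 1, ∀ i j, 0 ≤ coeffMatrix p r t i j := by
  intro t ht i j
  fin_cases i <;> fin_cases j <;> simp [coeffMatrix, (hp t ht).le, (hr t ht).le]

lemma hasDerivWithinAt_stateVec (hp : ∀ x ∈ Icc (0:ℝ) 1, 0 < p x)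
    (hy : ContDiffOn ℝ 2 y (Icc 0 1))
    (hpy : ContDiffOn ℝ 2 (fun x => p x * Dv (Dv y) x) (Icc 0 1))
    (heq : ∀ x ∈ Icc (0:ℝ) 1, Dv (Dv (fun t => p t * Dv (Dv y) t)) x = r x * y x) :
    ∀ t ∈ Icc (0:ℝ) 1,
      HasDerivWithinAt (stateVec p y) (coeffMatrix p r t *ᵥ stateVec p y t) (Icc 0 1) t := by
  intro t ht
  refine hasDerivWithinAt_pi.2 fun i => ?_
  fin_cases i
  · simpa [stateVec, coeffMatrix, mulVec, dotProduct, Fin.sum_univ_four]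
      using hasDerivWithinAt_Dv hy two_ne_zero ht
  · simpa [stateVec, coeffMatrix, mulVec, dotProduct, Fin.sum_univ_four, (hp t ht).ne']
      using hasDerivWithinAt_Dv (contDiffOn_Dv (n := 1) hy) one_ne_zero ht
  · simpa [stateVec, coeffMatrix, mulVec, dotProduct, Fin.sum_univ_four]
      using hasDerivWithinAt_Dv hpy two_ne_zero ht
  · simpa [stateVec, coeffMatrix, mulVec, dotProduct, Fin.sum_univ_four, heq t ht]
      using hasDerivWithinAt_Dv (contDiffOn_Dv (n := 1) hpy) one_ne_zero ht

end FourthOrder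

theorem stmt_0 (p r y : ℝ → ℝ)
    (hpc : ContinuousOn p (Icc 0 1)) (hrc : ContinuousOn r (Icc 0 1))
    (hp : ∀ x ∈ Icc (0:ℝ) 1, 0 < p x) (hr : ∀ x ∈ Icc (0:ℝ) 1, 0 < r x)
    (hy : ContDiffOn ℝ 2 y (Icc 0 1))
    (hpy : ContDiffOn ℝ 2 (fun x => p x * Dv (Dv y) x) (Icc 0 1))
    (heq : ∀ x ∈ Icc (0:ℝ) 1, Dv (Dv (fun t => p t * Dv (Dv y) t)) x = r x * y x)
    (hnt : ∃ x ∈ Icc (0:ℝ) 1, y x ≠ 0)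
    (a : ℝ) (ha : a ∈ Ico (0:ℝ) 1)
    (h1 : 0 ≤ y a) (h2 : 0 ≤ Dv y a) (h3 : 0 ≤ Dv (Dv y) a)
    (h4 : 0 ≤ Dv (fun t => p t * Dv (Dv y) t) a) :
    0 < y 1 ∧ 0 < Dv y 1 ∧ 0 < Dv (Dv y) 1 ∧
      0 < Dv (fun t => p t * Dv (Dv y) t) 1 := by
  set Y := stateVec p y
  set A := coeffMatrix p r
  have hA := continuousOn_coeffMatrix hpc hrc hp
  have hY := hasDerivWithinAt_stateVec hp hy hpy heq
  have h1I : (1 : ℝ) ∈ Icc (0 : ℝ) 1 := right_mem_Icc.2 zero_le_one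
  have hsub : Icc a 1 ⊆ Icc 0 1 := Icc_subset_Icc_left ha.1
  have hA0 : ∀ t ∈ Icc a 1, ∀ i j, 0 ≤ A t i j := fun t ht => coeffMatrix_nonneg hp hr t (hsub ht)
  have hY' : ∀ t ∈ Icc a 1, HasDerivWithinAt Y (A t *ᵥ Y t) (Icc a 1) t := fun t ht =>
    (hY t (hsub ht)).mono hsub
  have hYa : 0 ≤ Y a := by
    intro i
    fin_cases i
    exacts [h1, h2, mul_nonneg (hp a (hsub (left_mem_Icc.2 ha.2.le))).le h3, h4]
  have hY0 := nonneg_of_hasDerivWithinAt_mulVec (hA.mono hsub) hA0 hY' hYa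
  obtain ⟨k, hk⟩ : ∃ k, 0 < Y 1 k := by
    by_contra! h
    obtain ⟨x, hx, hyx⟩ := hnt
    have hY1 : Y 1 = 0 := le_antisymm h (hY0 1 (right_mem_Icc.2 ha.2.le))
    exact hyx (congrFun (eq_zero_of_hasDerivWithinAt_mulVec_of_eq_zero_right hA hY hY1 x hx) 0)
  have hstep : ∀ k : Fin 4, 0 < Y 1 (k + 1) → 0 < Y 1 k := fun k =>
    pos_of_hasDerivWithinAt_mulVec_of_pos ha.2 (hA.mono hsub) hA0 hY' hY0 (by
      fin_cases k <;> simp [coeffMatrix, hp 1 h1I, hr 1 h1I])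
  have hpos := Fin.forall_of_succ_imp (P := fun i => 0 < Y 1 i) hstep hk
  exact ⟨hpos 0, hpos 1, pos_of_mul_pos_right (hpos 2) (hp 1 h1I).le, hpos 3⟩
end

section
/- Let p, r : [0,1] → ℝ be continuous with p(x) > 0 and r(x) > 0 for all x ∈ [0,1], and let c, α ∈ ℝ. Suppose λ ∈ ℂ and y : [0,1] → ℂ is a nontrivial function with y ∈ C²([0,1],ℂ), p·y'' ∈ C²([0,1],ℂ), satisfying (p·y'')''(x) − λ·(−y''(x) + c·r(x)·y(x)) = 0 for all x ∈ [0,1] together with either the boundary conditions y(0) = y'(0) = y(1) = y'(1) = 0, or the boundary conditions y(0) = y'(0) = y'(1) = 0 and (p·y'')'(1) + λ·α·y(1) = 0. Then λ is real. -/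
open Set

/-- Derivative within the interval `[0,1]` for complex-valued functions of a real variable. -/
noncomputable def DvC (y : ℝ → ℂ) : ℝ → ℂ := derivWithin y (Set.Icc 0 1)

/-!
Multiplying the equation by `conj y` and integrating by parts (twice for the fourth-order term,
once for `y''`) gives, under either set of boundary conditions,
`∫ p |y''|² = λ (∫ |y'|² + c ∫ r |y|² + α |y 1|²)`, in which everything except `λ` is real.
The left side is nonzero: otherwise `y'' ≡ 0`, and `y 0 = y' 0 = 0` force `y ≡ 0`.
So `λ` times a real number is a nonzero real number, and `λ` is real.
-/

open MeasureTheory ComplexConjugate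

section Interval

variable {a b : ℝ}

theorem integral_derivWithin_mul_conj (hab : a < b) {f g : ℝ → ℂ}
    (hf : ContDiffOn ℝ 1 f (Icc a b)) (hg : ContDiffOn ℝ 1 g (Icc a b)) :
    ∫ x in a..b, derivWithin f (Icc a b) x * conj (g x) =
      f b * conj (g b) - f a * conj (g a) -
        ∫ x in a..b, f x * conj (derivWithin g (Icc a b) x) := by
  have hs : UniqueDiffOn ℝ (Icc a b) := uniqueDiffOn_Icc hab
  have hf' := (hf.continuousOn_derivWithin hs le_rfl).intervalIntegrable_of_Icc
    (μ := volume) hab.le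
  have hg' : IntervalIntegrable (fun x => conj (derivWithin g (Icc a b) x)) volume a b :=
    (Complex.continuous_conj.comp_continuousOn
      (hg.continuousOn_derivWithin hs le_rfl)).intervalIntegrable_of_Icc hab.le
  have hI : uIcc a b = Icc a b := uIcc_of_le hab.le
  have hfg := intervalIntegral.integral_mul_deriv_eq_deriv_mul_of_hasDerivWithinAt (u := f)
    (v := fun x => conj (g x))
    (by rw [hI]; exact fun x hx => (hf.differentiableOn one_ne_zero x hx).hasDerivWithinAt)
    (by rw [hI]; exact fun x hx => (hg.differentiableOn one_ne_zero x hx).hasDerivWithinAt.star)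
    hf' hg'
  linear_combination hfg

theorem eqOn_zero_of_derivWithin_eqOn_zero {f : ℝ → ℂ} (hf : DifferentiableOn ℝ f (Icc a b))
    (hf' : EqOn (derivWithin f (Icc a b)) 0 (Icc a b)) (ha : f a = 0) :
    EqOn f 0 (Icc a b) := fun x hx =>
  (constant_of_derivWithin_zero hf (fun _ hy => hf' (Ico_subset_Icc_self hy)) x hx).trans ha

theorem eqOn_zero_of_integral_eq_zero (hab : a < b) {f : ℝ → ℝ} (hf : ContinuousOn f (Icc a b))
    (hf₀ : ∀ x ∈ Icc a b, 0 ≤ f x) (h : ∫ x in a..b, f x = 0) : EqOn f 0 (Icc a b) := by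
  have hae : f =ᵐ[volume.restrict (Icc a b)] 0 := by
    rw [← Measure.restrict_congr_set Ioc_ae_eq_Icc]
    refine (intervalIntegral.integral_eq_zero_iff_of_le_of_nonneg_ae hab.le ?_
      (hf.intervalIntegrable_of_Icc hab.le)).1 h
    exact (ae_restrict_mem measurableSet_Ioc).mono fun x hx => hf₀ x (Ioc_subset_Icc_self hx)
  refine Measure.eqOn_of_ae_eq hae hf continuousOn_const ?_
  rw [interior_Icc, closure_Ioo hab.ne]

theorem eqOn_zero_of_derivWithin_derivWithin_eqOn_zero (hab : a < b) {f : ℝ → ℂ}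
    (hf : ContDiffOn ℝ 2 f (Icc a b)) (ha : f a = 0) (ha' : derivWithin f (Icc a b) a = 0)
    (hf'' : EqOn (derivWithin (derivWithin f (Icc a b)) (Icc a b)) 0 (Icc a b)) :
    EqOn f 0 (Icc a b) :=
  have hf' : ContDiffOn ℝ 1 (derivWithin f (Icc a b)) (Icc a b) :=
    hf.derivWithin (uniqueDiffOn_Icc hab) (by norm_num)
  eqOn_zero_of_derivWithin_eqOn_zero (hf.differentiableOn two_ne_zero)
    (eqOn_zero_of_derivWithin_eqOn_zero (hf'.differentiableOn one_ne_zero) hf'' ha') ha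

theorem integral_mul_normSq_ne_zero (hab : a < b) {p : ℝ → ℝ} {f : ℝ → ℂ}
    (hpc : ContinuousOn p (Icc a b)) (hp : ∀ x ∈ Icc a b, 0 < p x)
    (hf : ContinuousOn f (Icc a b)) (hf₀ : ¬EqOn f 0 (Icc a b)) :
    ∫ x in a..b, p x * Complex.normSq (f x) ≠ 0 := fun h => hf₀ fun x hx => by
  have := eqOn_zero_of_integral_eq_zero hab
    (hpc.mul (Complex.continuous_normSq.comp_continuousOn hf))
    (fun x hx => mul_nonneg (hp x hx).le (Complex.normSq_nonneg _)) h hx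
  simpa [(hp x hx).ne'] using this

end Interval

theorem Complex.im_eq_zero_of_ofReal_eq_mul_ofReal {A Q : ℝ} {z : ℂ} (hA : A ≠ 0)
    (h : (A : ℂ) = z * Q) : z.im = 0 := by
  have hQ : Q ≠ 0 := by
    rintro rfl
    exact hA (by simpa using h)
  simpa [hQ] using (congrArg Complex.im h).symm

theorem integral_mul_normSq_DvC_DvC_eq {p r : ℝ → ℝ} {c : ℝ} {lam : ℂ} {y : ℝ → ℂ}
    (hrc : ContinuousOn r (Icc 0 1)) (hy : ContDiffOn ℝ 2 y (Icc 0 1))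
    (hpy : ContDiffOn ℝ 2 (fun x => (p x : ℂ) * DvC (DvC y) x) (Icc 0 1))
    (heq : ∀ x ∈ Icc (0:ℝ) 1,
      DvC (DvC (fun t => (p t : ℂ) * DvC (DvC y) t)) x
        - lam * (-(DvC (DvC y) x) + (c : ℂ) * (r x : ℂ) * y x) = 0)
    (hy0 : y 0 = 0) (hy'0 : DvC y 0 = 0) (hy'1 : DvC y 1 = 0) :
    ((∫ x in (0:ℝ)..1, p x * Complex.normSq (DvC (DvC y) x) : ℝ) : ℂ) =
      lam * ((∫ x in (0:ℝ)..1, Complex.normSq (DvC y x) : ℝ) +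
        c * (∫ x in (0:ℝ)..1, r x * Complex.normSq (y x) : ℝ)) -
      DvC (fun t => (p t : ℂ) * DvC (DvC y) t) 1 * conj (y 1) := by
  have hs : UniqueDiffOn ℝ (Icc (0:ℝ) 1) := uniqueDiffOn_Icc one_pos
  set u := fun t => (p t : ℂ) * DvC (DvC y) t
  have hy' : ContDiffOn ℝ 1 (DvC y) (Icc 0 1) := hy.derivWithin hs (by norm_num)
  have hu' : ContDiffOn ℝ 1 (DvC u) (Icc 0 1) := hpy.derivWithin hs (by norm_num)
  have hy'' : ContinuousOn (DvC (DvC y)) (Icc 0 1) := hy'.continuousOn_derivWithin hs le_rfl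
  have hyc : ContinuousOn (fun x => conj (y x)) (Icc 0 1) :=
    Complex.continuous_conj.comp_continuousOn hy.continuousOn
  have h₁ := integral_derivWithin_mul_conj one_pos hu' (hy.of_le (by norm_num))
  have h₂ := integral_derivWithin_mul_conj one_pos (hpy.of_le (by norm_num)) hy'
  have h₃ := integral_derivWithin_mul_conj one_pos hy' (hy.of_le (by norm_num))
  have heq_conj : ∫ x in (0:ℝ)..1, DvC (DvC u) x * conj (y x) =
      lam * (-∫ x in (0:ℝ)..1, DvC (DvC y) x * conj (y x)) +
        lam * c * ∫ x in (0:ℝ)..1, (r x : ℂ) * (y x * conj (y x)) := by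
    rw [← intervalIntegral.integral_neg, ← intervalIntegral.integral_const_mul,
      ← intervalIntegral.integral_const_mul, ← intervalIntegral.integral_add]
    · refine intervalIntegral.integral_congr fun x hx => ?_
      rw [uIcc_of_le zero_le_one] at hx
      linear_combination (conj (y x)) * heq x hx
    · exact ((hy''.mul hyc).neg.intervalIntegrable_of_Icc zero_le_one).const_mul _
    · exact (((Complex.continuous_ofReal.comp_continuousOn hrc).mul
        (hy.continuousOn.mul hyc)).intervalIntegrable_of_Icc zero_le_one).const_mul _
  have hA : ∫ x in (0:ℝ)..1, u x * conj (DvC (DvC y) x) =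
      ((∫ x in (0:ℝ)..1, p x * Complex.normSq (DvC (DvC y) x) : ℝ) : ℂ) := by
    rw [← intervalIntegral.integral_ofReal]
    refine intervalIntegral.integral_congr fun x _ => ?_
    simp only [u, Complex.ofReal_mul, Complex.mul_conj, mul_assoc]
  have hB : ∫ x in (0:ℝ)..1, DvC y x * conj (DvC y x) =
      ((∫ x in (0:ℝ)..1, Complex.normSq (DvC y x) : ℝ) : ℂ) := by
    rw [← intervalIntegral.integral_ofReal]
    exact intervalIntegral.integral_congr fun x _ => Complex.mul_conj _
  have hC : ∫ x in (0:ℝ)..1, (r x : ℂ) * (y x * conj (y x)) =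
      ((∫ x in (0:ℝ)..1, r x * Complex.normSq (y x) : ℝ) : ℂ) := by
    rw [← intervalIntegral.integral_ofReal]
    refine intervalIntegral.integral_congr fun x _ => ?_
    simp only [Complex.ofReal_mul, Complex.mul_conj]
  simp only [hy0, hy'0, hy'1, map_zero] at h₁ h₂ h₃
  simp only [DvC] at h₁ h₂ h₃ heq_conj hA hB hC ⊢
  linear_combination -hA + h₂ - h₁ + heq_conj - lam * h₃ + lam * hB + lam * c * hC

theorem stmt_2_general (p r : ℝ → ℝ) (c alpha : ℝ) (lam : ℂ) (y : ℝ → ℂ)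
    (hpc : ContinuousOn p (Icc 0 1)) (hrc : ContinuousOn r (Icc 0 1))
    (hp : ∀ x ∈ Icc (0:ℝ) 1, 0 < p x)
    (hy : ContDiffOn ℝ 2 y (Icc 0 1))
    (hpy : ContDiffOn ℝ 2 (fun x => (p x : ℂ) * DvC (DvC y) x) (Icc 0 1))
    (heq : ∀ x ∈ Icc (0:ℝ) 1,
      DvC (DvC (fun t => (p t : ℂ) * DvC (DvC y) t)) x
        - lam * (-(DvC (DvC y) x) + (c : ℂ) * (r x : ℂ) * y x) = 0)
    (hnt : ∃ x ∈ Icc (0:ℝ) 1, y x ≠ 0)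
    (hbc : (y 0 = 0 ∧ DvC y 0 = 0 ∧ y 1 = 0 ∧ DvC y 1 = 0) ∨
      (y 0 = 0 ∧ DvC y 0 = 0 ∧ DvC y 1 = 0 ∧
        DvC (fun t => (p t : ℂ) * DvC (DvC y) t) 1 + lam * (alpha : ℂ) * y 1 = 0)) :
    lam.im = 0 := by
  obtain ⟨hy0, hy'0, hy'1⟩ : y 0 = 0 ∧ DvC y 0 = 0 ∧ DvC y 1 = 0 := by
    rcases hbc with ⟨h0, h0', -, h1'⟩ | ⟨h0, h0', h1', -⟩ <;> exact ⟨h0, h0', h1'⟩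
  have hA : ∫ x in (0:ℝ)..1, p x * Complex.normSq (DvC (DvC y) x) ≠ 0 := by
    refine integral_mul_normSq_ne_zero one_pos hpc hp ?_ fun hy'' => ?_
    · exact (hy.derivWithin (uniqueDiffOn_Icc one_pos) (by norm_num)).continuousOn_derivWithin
        (uniqueDiffOn_Icc one_pos) le_rfl
    · obtain ⟨x, hx, hyx⟩ := hnt
      exact hyx (eqOn_zero_of_derivWithin_derivWithin_eqOn_zero one_pos hy hy0 hy'0 hy'' hx)
  have key : ((∫ x in (0:ℝ)..1, p x * Complex.normSq (DvC (DvC y) x) : ℝ) : ℂ) =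
      lam * ((∫ x in (0:ℝ)..1, Complex.normSq (DvC y x)) +
        c * (∫ x in (0:ℝ)..1, r x * Complex.normSq (y x)) + alpha * Complex.normSq (y 1) : ℝ) := by
    rw [integral_mul_normSq_DvC_DvC_eq hrc hy hpy heq hy0 hy'0 hy'1]
    rcases hbc with ⟨-, -, hy1, -⟩ | ⟨-, -, -, hbc1⟩
    · simp [hy1]
    · rw [eq_neg_of_add_eq_zero_left hbc1]
      push_cast
      rw [← Complex.mul_conj]
      ring
  exact Complex.im_eq_zero_of_ofReal_eq_mul_ofReal hA key

theorem stmt_2 (p r : ℝ → ℝ) (c alpha : ℝ) (lam : ℂ) (y : ℝ → ℂ)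
    (hpc : ContinuousOn p (Icc 0 1)) (hrc : ContinuousOn r (Icc 0 1))
    (hp : ∀ x ∈ Icc (0:ℝ) 1, 0 < p x) (hr : ∀ x ∈ Icc (0:ℝ) 1, 0 < r x)
    (hy : ContDiffOn ℝ 2 y (Icc 0 1))
    (hpy : ContDiffOn ℝ 2 (fun x => (p x : ℂ) * DvC (DvC y) x) (Icc 0 1))
    (heq : ∀ x ∈ Icc (0:ℝ) 1,
      DvC (DvC (fun t => (p t : ℂ) * DvC (DvC y) t)) x
        - lam * (-(DvC (DvC y) x) + (c : ℂ) * (r x : ℂ) * y x) = 0)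
    (hnt : ∃ x ∈ Icc (0:ℝ) 1, y x ≠ 0)
    (hbc : (y 0 = 0 ∧ DvC y 0 = 0 ∧ y 1 = 0 ∧ DvC y 1 = 0) ∨
      (y 0 = 0 ∧ DvC y 0 = 0 ∧ DvC y 1 = 0 ∧
        DvC (fun t => (p t : ℂ) * DvC (DvC y) t) 1 + lam * (alpha : ℂ) * y 1 = 0)) :
    lam.im = 0 :=
  stmt_2_general p r c alpha lam y hpc hrc hp hy hpy heq hnt hbc
end

section
/- Let p, r : [0,1] → ℝ be continuous with p(x) > 0 and r(x) > 0 for all x ∈ [0,1], and let f : [0,1] → ℝ be continuous. Let y ∈ C²([0,1],ℝ) with p·y'' ∈ C²([0,1],ℝ) satisfy (p·y'')''(x) = r(x)·f(x) for all x ∈ [0,1] and the boundary conditions y(0) = y'(0) = y(1) = y'(1) = 0. If y has at least n sign changes on (0,1), then f has at least n sign changes on (0,1). -/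
open Set

/-- `g` has at least `n` sign changes on `(0,1)`: there exist points
`0 < x₁ < … < x_{n+1} < 1` with `g(x_k) * g(x_{k+1}) < 0` for all `k`. -/
def SignChanges (g : ℝ → ℝ) (n : ℕ) : Prop :=
  ∃ x : Fin (n + 1) → ℝ, StrictMono x ∧ (∀ k, x k ∈ Set.Ioo (0:ℝ) 1) ∧
    ∀ k : Fin n, g (x k.castSucc) * g (x k.succ) < 0

def SignAlternating {n : ℕ} (a : Fin (n + 1) → ℝ) : Prop :=
  ∀ k : Fin n, a k.castSucc * a k.succ < 0

def finFwdDiff {n : ℕ} (a : Fin (n + 1) → ℝ) : Fin n → ℝ :=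
  fun k => a k.succ - a k.castSucc

lemma sub_mul_sub_neg_of_mul_neg {u v w : ℝ} (huv : u * v < 0) (hvw : v * w < 0) :
    (v - u) * (w - v) < 0 := by
  nlinarith [mul_pos_of_neg_of_neg huv hvw, sq_nonneg v, sq_nonneg (u - w)]

namespace SignAlternating

variable {n : ℕ}

lemma fwdDiff {a : Fin (n + 2) → ℝ} (h : SignAlternating a) :
    SignAlternating (finFwdDiff a) := by
  intro k
  simpa only [finFwdDiff, Fin.succ_castSucc] using
    sub_mul_sub_neg_of_mul_neg (h k.castSucc) (h k.succ)

lemma cons {a : Fin (n + 1) → ℝ} (h : SignAlternating a) {e : ℝ} (he : e * a 0 < 0) :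
    SignAlternating (Fin.cons e a : Fin (n + 2) → ℝ) := by
  intro k
  induction k using Fin.cases with
  | zero => simpa using he
  | succ k => simpa [← Fin.succ_castSucc] using h k

lemma snoc {a : Fin (n + 1) → ℝ} (h : SignAlternating a) {e : ℝ} (he : a (Fin.last n) * e < 0) :
    SignAlternating (Fin.snoc a e : Fin (n + 2) → ℝ) := by
  intro k
  induction k using Fin.lastCases with
  | last => simpa using he
  | cast k => simpa only [Fin.succ_castSucc, Fin.snoc_castSucc] using h k

end SignAlternating

lemma finFwdDiff_cons {n : ℕ} (e : ℝ) (a : Fin (n + 1) → ℝ) :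
    finFwdDiff (Fin.cons e a : Fin (n + 2) → ℝ) = Fin.cons (a 0 - e) (finFwdDiff a) := by
  ext k
  induction k using Fin.cases with
  | zero => simp [finFwdDiff]
  | succ k => simp [finFwdDiff]

lemma finFwdDiff_snoc {n : ℕ} (a : Fin (n + 1) → ℝ) (e : ℝ) :
    finFwdDiff (Fin.snoc a e : Fin (n + 2) → ℝ) = Fin.snoc (finFwdDiff a) (e - a (Fin.last n)) := by
  ext k
  induction k using Fin.lastCases with
  | last => simp [finFwdDiff]
  | cast k => simp only [finFwdDiff, Fin.succ_castSucc, Fin.snoc_castSucc]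

lemma SignAlternating.finFwdDiff_cons_snoc_zero {n : ℕ} {a : Fin (n + 2) → ℝ}
    (h : SignAlternating a) :
    SignAlternating (finFwdDiff (Fin.cons 0 (Fin.snoc a 0) : Fin (n + 4) → ℝ)) := by
  rw [finFwdDiff_cons, finFwdDiff_snoc]
  refine (h.fwdDiff.snoc ?_).cons ?_
  · have := h (Fin.last n)
    simp only [finFwdDiff, Fin.succ_last] at this ⊢
    nlinarith [sq_nonneg (a (Fin.last (n + 1)))]
  · have := h 0
    simp only [← Fin.castSucc_zero, Fin.snoc_castSucc, finFwdDiff] at this ⊢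
    nlinarith [sq_nonneg (a (Fin.castSucc 0))]

section MeanValue

variable {g g' : ℝ → ℝ} {n : ℕ}

lemma signChanges_of_signAlternating_finFwdDiff (hc : ContinuousOn g (Icc 0 1))
    (hd : ∀ t ∈ Ioo (0 : ℝ) 1, HasDerivAt g (g' t) t) {x : Fin (n + 2) → ℝ} (hx : StrictMono x)
    (hx01 : ∀ k, x k ∈ Icc (0 : ℝ) 1) (halt : SignAlternating (finFwdDiff (g ∘ x))) :
    SignChanges g' n := by
  have hmvt : ∀ k : Fin (n + 1), ∃ c ∈ Ioo (x k.castSucc) (x k.succ),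
      g' c = finFwdDiff (g ∘ x) k / (x k.succ - x k.castSucc) := fun k =>
    exists_hasDerivAt_eq_slope g g' (hx k.castSucc_lt_succ)
      (hc.mono (Icc_subset_Icc (hx01 _).1 (hx01 _).2))
      fun t ht => hd t ⟨(hx01 _).1.trans_lt ht.1, ht.2.trans_le (hx01 _).2⟩
  choose c hc_mem hc_eq using hmvt
  refine ⟨c, Fin.strictMono_iff_lt_succ.2 fun k => ?_, fun k => ?_, fun k => ?_⟩
  · simpa only [Fin.succ_castSucc] using (hc_mem k.castSucc).2.trans (hc_mem k.succ).1
  · exact ⟨(hx01 _).1.trans_lt (hc_mem k).1, (hc_mem k).2.trans_le (hx01 _).2⟩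
  · rw [hc_eq, hc_eq, div_mul_div_comm]
    exact div_neg_of_neg_of_pos (halt k) <|
      mul_pos (sub_pos.2 (hx Fin.castSucc_lt_succ)) (sub_pos.2 (hx Fin.castSucc_lt_succ))

lemma SignChanges.deriv (hc : ContinuousOn g (Icc 0 1))
    (hd : ∀ t ∈ Ioo (0 : ℝ) 1, HasDerivAt g (g' t) t) (h : SignChanges g (n + 1)) :
    SignChanges g' n := by
  obtain ⟨x, hx, hx01, halt⟩ := h
  exact signChanges_of_signAlternating_finFwdDiff hc hd hx (fun k => Ioo_subset_Icc_self (hx01 k))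
    (SignAlternating.fwdDiff halt)

lemma SignChanges.deriv_of_eq_zero (hc : ContinuousOn g (Icc 0 1))
    (hd : ∀ t ∈ Ioo (0 : ℝ) 1, HasDerivAt g (g' t) t) (h0 : g 0 = 0) (h1 : g 1 = 0)
    (h : SignChanges g (n + 1)) : SignChanges g' (n + 2) := by
  obtain ⟨x, hx, hx01, halt⟩ := h
  have hmono : StrictMono (Fin.cons 0 (Fin.snoc x 1) : Fin (n + 4) → ℝ) := by
    refine Fin.strictMono_cons.2 ⟨fun j => ?_, ?_⟩
    · induction j using Fin.lastCases with
      | last => simp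
      | cast j => simpa using (hx01 j).1
    · rw [← Fin.insertNth_last']
      exact Fin.strictMono_insertNth_last hx 1 (hx01 _).2
  refine signChanges_of_signAlternating_finFwdDiff hc hd hmono (fun k => ?_) ?_
  · induction k using Fin.cases with
    | zero => simp
    | succ k =>
      induction k using Fin.lastCases with
      | last => simp
      | cast k => simpa using Ioo_subset_Icc_self (hx01 k)
  · rw [Fin.comp_cons, Fin.comp_snoc, h0, h1]
    exact SignAlternating.finFwdDiff_cons_snoc_zero halt

end MeanValue

lemma signChanges_zero (g : ℝ → ℝ) : SignChanges g 0 :=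
  ⟨fun _ => 1 / 2, Subsingleton.strictMono (α := Fin 1) _, fun _ => by norm_num, fun k => k.elim0⟩

lemma SignChanges.congr {g h : ℝ → ℝ} {n : ℕ} (hg : SignChanges g n) (hgh : EqOn g h (Ioo 0 1)) :
    SignChanges h n := by
  obtain ⟨x, hx, hx01, halt⟩ := hg
  exact ⟨x, hx, hx01, fun k => by simpa only [hgh (hx01 _)] using halt k⟩

lemma signChanges_mul_left_iff {w g : ℝ → ℝ} {n : ℕ} (hw : ∀ t ∈ Ioo (0 : ℝ) 1, 0 < w t) :
    SignChanges (fun t => w t * g t) n ↔ SignChanges g n := by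
  refine exists_congr fun x => and_congr_right fun _ => and_congr_right fun hx01 =>
    forall_congr' fun k => ?_
  rw [mul_mul_mul_comm]
  simpa using mul_lt_mul_iff_of_pos_left (mul_pos (hw _ (hx01 _)) (hw _ (hx01 _)))
    (b := g (x k.castSucc) * g (x k.succ)) (c := 0)

lemma hasDerivAt_Dv {g : ℝ → ℝ} (hg : DifferentiableOn ℝ g (Icc 0 1)) {t : ℝ}
    (ht : t ∈ Ioo (0 : ℝ) 1) : HasDerivAt g (Dv g t) t :=
  (hg t (Ioo_subset_Icc_self ht)).hasDerivWithinAt.hasDerivAt (Icc_mem_nhds ht.1 ht.2)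

namespace SignChanges

variable {g : ℝ → ℝ} {n : ℕ}

lemma Dv (hg : DifferentiableOn ℝ g (Icc 0 1)) (h : SignChanges g (n + 1)) :
    SignChanges (_root_.Dv g) n :=
  h.deriv hg.continuousOn fun _ => hasDerivAt_Dv hg

lemma Dv_of_eq_zero (hg : DifferentiableOn ℝ g (Icc 0 1)) (h0 : g 0 = 0) (h1 : g 1 = 0)
    (h : SignChanges g (n + 1)) : SignChanges (_root_.Dv g) (n + 2) :=
  h.deriv_of_eq_zero hg.continuousOn (fun _ => hasDerivAt_Dv hg) h0 h1

end SignChanges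

theorem stmt_6_general (p r f y : ℝ → ℝ) (n : ℕ)
    (hp : ∀ x ∈ Icc (0:ℝ) 1, 0 < p x) (hr : ∀ x ∈ Icc (0:ℝ) 1, 0 < r x)
    (hy : ContDiffOn ℝ 2 y (Icc 0 1))
    (hpy : ContDiffOn ℝ 2 (fun x => p x * Dv (Dv y) x) (Icc 0 1))
    (heq : ∀ x ∈ Icc (0:ℝ) 1, Dv (Dv (fun t => p t * Dv (Dv y) t)) x = r x * f x)
    (hbc : y 0 = 0 ∧ Dv y 0 = 0 ∧ y 1 = 0 ∧ Dv y 1 = 0)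
    (hsc : SignChanges y n) :
    SignChanges f n := by
  obtain _ | m := n
  · exact signChanges_zero f
  have huniq : UniqueDiffOn ℝ (Icc (0 : ℝ) 1) := uniqueDiffOn_Icc zero_lt_one
  obtain ⟨hy0, hy'0, hy1, hy'1⟩ := hbc
  have hy' : ContDiffOn ℝ 1 (Dv y) (Icc 0 1) := hy.derivWithin huniq (by norm_num)
  have hpy' : ContDiffOn ℝ 1 (Dv fun t => p t * Dv (Dv y) t) (Icc 0 1) :=
    hpy.derivWithin huniq (by norm_num)
  have hy'' : SignChanges (Dv (Dv y)) (m + 3) :=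
    (hsc.Dv_of_eq_zero (hy.differentiableOn (by norm_num)) hy0 hy1).Dv_of_eq_zero
      (hy'.differentiableOn one_ne_zero) hy'0 hy'1
  have hpy'' : SignChanges (fun t => p t * Dv (Dv y) t) (m + 3) :=
    (signChanges_mul_left_iff fun t ht => hp t (Ioo_subset_Icc_self ht)).2 hy''
  have hrf : SignChanges (fun t => r t * f t) (m + 1) :=
    ((hpy''.Dv (hpy.differentiableOn (by norm_num))).Dv (hpy'.differentiableOn one_ne_zero)).congr
      fun t ht => heq t (Ioo_subset_Icc_self ht)
  exact (signChanges_mul_left_iff fun t ht => hr t (Ioo_subset_Icc_self ht)).1 hrf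

theorem stmt_6 (p r f y : ℝ → ℝ) (n : ℕ)
    (hpc : ContinuousOn p (Icc 0 1)) (hrc : ContinuousOn r (Icc 0 1))
    (hp : ∀ x ∈ Icc (0:ℝ) 1, 0 < p x) (hr : ∀ x ∈ Icc (0:ℝ) 1, 0 < r x)
    (hfc : ContinuousOn f (Icc 0 1))
    (hy : ContDiffOn ℝ 2 y (Icc 0 1))
    (hpy : ContDiffOn ℝ 2 (fun x => p x * Dv (Dv y) x) (Icc 0 1))
    (heq : ∀ x ∈ Icc (0:ℝ) 1, Dv (Dv (fun t => p t * Dv (Dv y) t)) x = r x * f x)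
    (hbc : y 0 = 0 ∧ Dv y 0 = 0 ∧ y 1 = 0 ∧ Dv y 1 = 0)
    (hsc : SignChanges y n) :
    SignChanges f n :=
  stmt_6_general p r f y n hp hr hy hpy heq hbc hsc
end

section
/- Let p, r : [0,1] → ℝ be continuous with p(x) > 0 and r(x) > 0 for all x ∈ [0,1], and let c, α ∈ ℝ. If λ < 0 and y₁, y₂ are nontrivial classical solutions of (p·y'')'' − λ·(−y'' + c·r·y) = 0 both satisfying y(0) = y'(0) = y'(1) = 0 and (p·y'')'(1) + λ·α·y(1) = 0, then y₁ and y₂ are linearly dependent; i.e., every negative eigenvalue of this boundary-value problem has geometric multiplicity 1. -/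
/-!
A solution `y` of `(E_T)` with `λ ≤ 0` that satisfies `y(0) = y'(0) = y(1) = y'(1) = 0` and
`(p y'')'(1) = 0` vanishes identically. First `(p y'')(1) = 0`: for `c ≥ 0` the concomitant
`F = (p y'')' y - (p y'') y' + λ y y'` has `F' = λ c r y² + λ y'² - p y''² ≤ 0` and vanishes at both
ends, so `F' (1) = -p(1) y''(1)² = 0`; for `c ≤ 0`, if `(p y'')(1) > 0` then walking back from `1`
we get `y' < 0`, `y > 0`, `(p y'')'' ≥ 0`, so `p y''` stays positive all the way down and
`y(0) > 0`. Once all four Cauchy data vanish at `1`, a backward Grönwall estimate for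
`y² + y'² + (p y'')² + ((p y'')')²` gives `y = 0`.

Given two eigenfunctions, `y₂(1) y₁ - y₁(1) y₂` satisfies (BC2) and vanishes at `1`, hence is
zero; if `y₁(1) = 0`, then `y₁` itself is zero.
-/

open Set

/-- `y` is not identically zero on `[0,1]`. -/
def Nontriv (y : ℝ → ℝ) : Prop := ∃ x ∈ Set.Icc (0:ℝ) 1, y x ≠ 0

/-- `y` is a classical solution of `(p y'')'' - lam * (-y'' + c r y) = 0` on `[0,1]`. -/
def SolT (p r : ℝ → ℝ) (c lam : ℝ) (y : ℝ → ℝ) : Prop :=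
  ContDiffOn ℝ 2 y (Set.Icc 0 1) ∧
  ContDiffOn ℝ 2 (fun x => p x * Dv (Dv y) x) (Set.Icc 0 1) ∧
  ∀ x ∈ Set.Icc (0:ℝ) 1,
    Dv (Dv (fun t => p t * Dv (Dv y) t)) x
      - lam * (-(Dv (Dv y) x) + c * r x * y x) = 0

/-- Clamped boundary conditions `y(0) = y'(0) = y(1) = y'(1) = 0`. -/
def BC1 (y : ℝ → ℝ) : Prop := y 0 = 0 ∧ Dv y 0 = 0 ∧ y 1 = 0 ∧ Dv y 1 = 0

/-- Boundary conditions `y(0) = y'(0) = y'(1) = 0`, `(p y'')'(1) + lam * alpha * y(1) = 0`. -/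
def BC2 (p : ℝ → ℝ) (lam alpha : ℝ) (y : ℝ → ℝ) : Prop :=
  y 0 = 0 ∧ Dv y 0 = 0 ∧ Dv y 1 = 0 ∧
  Dv (fun t => p t * Dv (Dv y) t) 1 + lam * alpha * y 1 = 0

/-- Linear dependence of two functions on `[0,1]`. -/
def LinDep (y₁ y₂ : ℝ → ℝ) : Prop :=
  ∃ a b : ℝ, (a ≠ 0 ∨ b ≠ 0) ∧ ∀ x ∈ Set.Icc (0:ℝ) 1, a * y₁ x + b * y₂ x = 0


noncomputable def moment (p y : ℝ → ℝ) : ℝ → ℝ := fun t => p t * Dv (Dv y) t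

section Dv

variable {f g : ℝ → ℝ} {x : ℝ}

lemma hasDerivWithinAt_Dv_s14 (hf : DifferentiableOn ℝ f (Icc 0 1)) (hx : x ∈ Icc (0:ℝ) 1) :
    HasDerivWithinAt f (Dv f x) (Icc 0 1) x :=
  (hf x hx).hasDerivWithinAt

lemma hasDerivWithinAt_Dv_interior {D : Set ℝ} (hf : DifferentiableOn ℝ f (Icc 0 1))
    (hD : D ⊆ Icc 0 1) : ∀ x ∈ interior D, HasDerivWithinAt f (Dv f x) (interior D) x :=
  fun _ hx => (hasDerivWithinAt_Dv_s14 hf (hD (interior_subset hx))).mono (interior_subset.trans hD)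

lemma differentiableOn_Dv_of_contDiffOn (hf : ContDiffOn ℝ 2 f (Icc 0 1)) :
    DifferentiableOn ℝ (Dv f) (Icc 0 1) :=
  (hf.derivWithin (uniqueDiffOn_Icc one_pos) (by norm_num)).differentiableOn one_ne_zero

lemma Dv_congr (h : EqOn f g (Icc 0 1)) : EqOn (Dv f) (Dv g) (Icc 0 1) :=
  fun _ hx => derivWithin_congr h (h hx)

@[simp] lemma Dv_neg : Dv (fun t => -f t) = fun t => -Dv f t :=
  funext fun _ => derivWithin.fun_neg

lemma Dv_linComb (hf : DifferentiableOn ℝ f (Icc 0 1)) (hg : DifferentiableOn ℝ g (Icc 0 1))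
    (a b : ℝ) :
    EqOn (Dv fun t => a * f t + b * g t) (fun t => a * Dv f t + b * Dv g t) (Icc 0 1) :=
  fun x hx => (((hasDerivWithinAt_Dv_s14 hf hx).const_mul a).add
    ((hasDerivWithinAt_Dv_s14 hg hx).const_mul b)).derivWithin (uniqueDiffOn_Icc one_pos x hx)

@[simp] lemma moment_neg (p : ℝ → ℝ) : moment p (fun t => -f t) = fun t => -moment p f t := by
  funext t
  simp [moment]

end Dv

lemma le_mul_exp_of_neg_mul_le_deriv {φ φ' : ℝ → ℝ} {a b C : ℝ}
    (hcont : ContinuousOn φ (Icc a b))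
    (hderiv : ∀ x ∈ Ioo a b, HasDerivWithinAt φ (φ' x) (Ioo a b) x)
    (hineq : ∀ x ∈ Ioo a b, -(C * φ x) ≤ φ' x) :
    ∀ x ∈ Icc a b, φ x ≤ φ b * Real.exp (C * (b - x)) := by
  have hmono : MonotoneOn (fun t => φ t * Real.exp (C * t)) (Icc a b) := by
    refine monotoneOn_of_hasDerivWithinAt_nonneg (convex_Icc a b)
      (f' := fun t => φ' t * Real.exp (C * t) + φ t * (Real.exp (C * t) * C))
      (hcont.mul (by fun_prop)) ?_ ?_ <;> rw [interior_Icc] <;> intro x hx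
    · exact (hderiv x hx).mul
        (((hasDerivAt_id x).const_mul C).exp.hasDerivWithinAt.congr_deriv (by simp))
    · nlinarith [hineq x hx, Real.exp_pos (C * x)]
  intro x hx
  rw [← mul_le_mul_iff_of_pos_right (Real.exp_pos (C * x)), mul_assoc, ← Real.exp_add]
  convert hmono hx (right_mem_Icc.2 (hx.1.trans hx.2)) hx.2 using 3
  ring

lemma neg_mul_le_two_mul_mul {k K u v : ℝ} (hk : |k| ≤ K) :
    -(K * (u ^ 2 + v ^ 2)) ≤ 2 * k * u * v := by
  obtain ⟨h₁, h₂⟩ := abs_le.1 hk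
  nlinarith [mul_nonneg (sub_nonneg.2 h₂) (sq_nonneg (u - v)),
    mul_nonneg (neg_le_iff_add_nonneg.1 h₁) (sq_nonneg (u + v))]

/-- The right-hand side is the derivative of `a² + b² + w² + v²` along the first-order form
`a' = b, b' = q w, w' = v, v' = lam (-q w + c ρ a)` of `(E_T)`, where `(a, b, w, v)` stands for
`(y, y', p y'', (p y'')')`, `q = 1 / p` and `ρ = r`. -/
lemma neg_mul_sum_sq_le {a b w v q ρ lam c Q R : ℝ} (hq : |q| ≤ Q) (hρ : |ρ| ≤ R) :
    -((2 + (1 + |lam|) * Q + |lam| * |c| * R) * (a ^ 2 + b ^ 2 + w ^ 2 + v ^ 2))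
      ≤ 2 * a * b + 2 * b * (q * w) + 2 * w * v + 2 * v * (lam * (-(q * w) + c * ρ * a)) := by
  have hQ : 0 ≤ Q := (abs_nonneg q).trans hq
  have hR : 0 ≤ R := (abs_nonneg ρ).trans hρ
  have h₁ := neg_mul_le_two_mul_mul (u := a) (v := b) (abs_one.le : |(1:ℝ)| ≤ 1)
  have h₂ := neg_mul_le_two_mul_mul (u := b) (v := w) hq
  have h₃ := neg_mul_le_two_mul_mul (u := w) (v := v) (abs_one.le : |(1:ℝ)| ≤ 1)
  have h₄ := neg_mul_le_two_mul_mul (k := -(lam * q)) (K := |lam| * Q) (u := v) (v := w)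
    (by rw [abs_neg, abs_mul]; exact mul_le_mul_of_nonneg_left hq (abs_nonneg lam))
  have h₅ := neg_mul_le_two_mul_mul (k := lam * c * ρ) (K := |lam| * |c| * R) (u := v) (v := a)
    (by rw [abs_mul, abs_mul]; exact mul_le_mul_of_nonneg_left hρ (by positivity))
  linarith [mul_nonneg hQ (sq_nonneg a), mul_nonneg hQ (sq_nonneg v),
    mul_nonneg (mul_nonneg (abs_nonneg lam) hQ) (sq_nonneg a),
    mul_nonneg (mul_nonneg (abs_nonneg lam) hQ) (sq_nonneg b),
    mul_nonneg (mul_nonneg (mul_nonneg (abs_nonneg lam) (abs_nonneg c)) hR) (sq_nonneg b),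
    mul_nonneg (mul_nonneg (mul_nonneg (abs_nonneg lam) (abs_nonneg c)) hR) (sq_nonneg w),
    sq_nonneg a, sq_nonneg b, sq_nonneg w, sq_nonneg v]

namespace SolT

variable {p r : ℝ → ℝ} {c lam : ℝ} {z : ℝ → ℝ}

lemma differentiableOn (hz : SolT p r c lam z) : DifferentiableOn ℝ z (Icc 0 1) :=
  hz.1.differentiableOn (by norm_num)

lemma differentiableOn_Dv (hz : SolT p r c lam z) : DifferentiableOn ℝ (Dv z) (Icc 0 1) :=
  differentiableOn_Dv_of_contDiffOn hz.1

lemma differentiableOn_moment (hz : SolT p r c lam z) :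
    DifferentiableOn ℝ (moment p z) (Icc 0 1) :=
  hz.2.1.differentiableOn (by norm_num)

lemma differentiableOn_Dv_moment (hz : SolT p r c lam z) :
    DifferentiableOn ℝ (Dv (moment p z)) (Icc 0 1) :=
  differentiableOn_Dv_of_contDiffOn hz.2.1

lemma eqn (hz : SolT p r c lam z) {x : ℝ} (hx : x ∈ Icc (0:ℝ) 1) :
    Dv (Dv (moment p z)) x = lam * (-Dv (Dv z) x + c * r x * z x) :=
  sub_eq_zero.1 (hz.2.2 x hx)

lemma hasDerivWithinAt_Dv_moment (hz : SolT p r c lam z) {x : ℝ} (hx : x ∈ Icc (0:ℝ) 1) :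
    HasDerivWithinAt (Dv (moment p z)) (lam * (-Dv (Dv z) x + c * r x * z x)) (Icc 0 1) x :=
  hz.eqn hx ▸ hasDerivWithinAt_Dv_s14 hz.differentiableOn_Dv_moment hx

lemma neg (hz : SolT p r c lam z) : SolT p r c lam (fun t => -z t) := by
  refine ⟨hz.1.neg, ?_, fun x hx => ?_⟩
  · change ContDiffOn ℝ 2 (moment p fun t => -z t) (Icc 0 1)
    rw [moment_neg]
    exact hz.2.1.neg
  · change Dv (Dv (moment p fun t => -z t)) x
      - lam * (-Dv (Dv fun t => -z t) x + c * r x * -z x) = 0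
    simp only [moment_neg, Dv_neg, hz.eqn hx]
    ring

section linComb

variable {y₁ y₂ : ℝ → ℝ}

lemma Dv_Dv_linComb (hy₁ : SolT p r c lam y₁) (hy₂ : SolT p r c lam y₂) (a b : ℝ) :
    EqOn (Dv (Dv fun t => a * y₁ t + b * y₂ t))
      (fun t => a * Dv (Dv y₁) t + b * Dv (Dv y₂) t) (Icc 0 1) :=
  (Dv_congr (Dv_linComb hy₁.differentiableOn hy₂.differentiableOn a b)).trans
    (Dv_linComb hy₁.differentiableOn_Dv hy₂.differentiableOn_Dv a b)

lemma moment_linComb (hy₁ : SolT p r c lam y₁) (hy₂ : SolT p r c lam y₂) (a b : ℝ) :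
    EqOn (moment p fun t => a * y₁ t + b * y₂ t)
      (fun t => a * moment p y₁ t + b * moment p y₂ t) (Icc 0 1) := fun x hx => by
  simp only [moment, Dv_Dv_linComb hy₁ hy₂ a b hx]
  ring

lemma Dv_moment_linComb (hy₁ : SolT p r c lam y₁) (hy₂ : SolT p r c lam y₂) (a b : ℝ) :
    EqOn (Dv (moment p fun t => a * y₁ t + b * y₂ t))
      (fun t => a * Dv (moment p y₁) t + b * Dv (moment p y₂) t) (Icc 0 1) :=
  (Dv_congr (moment_linComb hy₁ hy₂ a b)).trans
    (Dv_linComb hy₁.differentiableOn_moment hy₂.differentiableOn_moment a b)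

lemma linComb (hy₁ : SolT p r c lam y₁) (hy₂ : SolT p r c lam y₂) (a b : ℝ) :
    SolT p r c lam (fun t => a * y₁ t + b * y₂ t) := by
  refine ⟨(contDiffOn_const.mul hy₁.1).add (contDiffOn_const.mul hy₂.1),
    ((contDiffOn_const.mul hy₁.2.1).add (contDiffOn_const.mul hy₂.2.1)).congr
      (moment_linComb hy₁ hy₂ a b), fun x hx => ?_⟩
  change Dv (Dv (moment p _)) x - _ = 0
  rw [((Dv_congr (Dv_moment_linComb hy₁ hy₂ a b)).trans (Dv_linComb
    hy₁.differentiableOn_Dv_moment hy₂.differentiableOn_Dv_moment a b)) hx,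
    Dv_Dv_linComb hy₁ hy₂ a b hx]
  linear_combination a * hy₁.eqn hx + b * hy₂.eqn hx

end linComb

end SolT

lemma BC2.shear {p : ℝ → ℝ} {lam alpha : ℝ} {y : ℝ → ℝ} (h : BC2 p lam alpha y) :
    Dv (moment p y) 1 + lam * alpha * y 1 = 0 :=
  h.2.2.2

lemma BC2.linComb {p r : ℝ → ℝ} {c lam alpha : ℝ} {y₁ y₂ : ℝ → ℝ}
    (hb₁ : BC2 p lam alpha y₁) (hb₂ : BC2 p lam alpha y₂)
    (hy₁ : SolT p r c lam y₁) (hy₂ : SolT p r c lam y₂) (a b : ℝ) :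
    BC2 p lam alpha (fun t => a * y₁ t + b * y₂ t) := by
  have h0 : (0:ℝ) ∈ Icc (0:ℝ) 1 := left_mem_Icc.2 zero_le_one
  have h1 : (1:ℝ) ∈ Icc (0:ℝ) 1 := right_mem_Icc.2 zero_le_one
  refine ⟨by simp [hb₁.1, hb₂.1], ?_, ?_, ?_⟩
  · simp [Dv_linComb hy₁.differentiableOn hy₂.differentiableOn a b h0, hb₁.2.1, hb₂.2.1]
  · simp [Dv_linComb hy₁.differentiableOn hy₂.differentiableOn a b h1, hb₁.2.2.1, hb₂.2.2.1]
  · change Dv (moment p _) 1 + _ = 0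
    rw [SolT.Dv_moment_linComb hy₁ hy₂ a b h1]
    linear_combination a * hb₁.shear + b * hb₂.shear

namespace SolT

variable {p r : ℝ → ℝ} {c lam : ℝ} {z : ℝ → ℝ}

lemma eqOn_zero_of_vanishing_at_one (hpc : ContinuousOn p (Icc 0 1))
    (hrc : ContinuousOn r (Icc 0 1)) (hp : ∀ x ∈ Icc (0:ℝ) 1, p x ≠ 0) (hz : SolT p r c lam z)
    (h1 : z 1 = 0) (h1' : Dv z 1 = 0) (hm1 : moment p z 1 = 0) (hs1 : Dv (moment p z) 1 = 0) :
    EqOn z 0 (Icc 0 1) := by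
  obtain ⟨Q, hQ⟩ := isCompact_Icc.exists_bound_of_continuousOn (hpc.inv₀ hp)
  obtain ⟨R, hR⟩ := isCompact_Icc.exists_bound_of_continuousOn hrc
  set φ : ℝ → ℝ := fun t => z t ^ 2 + Dv z t ^ 2 + moment p z t ^ 2 + Dv (moment p z) t ^ 2
  set φ' : ℝ → ℝ := fun t => 2 * z t * Dv z t + 2 * Dv z t * Dv (Dv z) t
    + 2 * moment p z t * Dv (moment p z) t
    + 2 * Dv (moment p z) t * (lam * (-Dv (Dv z) t + c * r t * z t))
  have hφ : ∀ x ∈ Icc (0:ℝ) 1, HasDerivWithinAt φ (φ' x) (Icc 0 1) x := fun x hx => by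
    refine (((((hasDerivWithinAt_Dv_s14 hz.differentiableOn hx).fun_pow 2).fun_add
      ((hasDerivWithinAt_Dv_s14 hz.differentiableOn_Dv hx).fun_pow 2)).fun_add
      ((hasDerivWithinAt_Dv_s14 hz.differentiableOn_moment hx).fun_pow 2)).fun_add
      ((hz.hasDerivWithinAt_Dv_moment hx).fun_pow 2)).congr_deriv ?_
    push_cast
    ring
  have hineq : ∀ x ∈ Icc (0:ℝ) 1, -((2 + (1 + |lam|) * Q + |lam| * |c| * R) * φ x) ≤ φ' x := by
    intro x hx
    have hm : Dv (Dv z) x = (p x)⁻¹ * moment p z x := by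
      rw [moment, ← mul_assoc, inv_mul_cancel₀ (hp x hx), one_mul]
    simp only [φ, φ', hm]
    exact neg_mul_sum_sq_le (by simpa using hQ x hx) (by simpa using hR x hx)
  intro x hx
  have hφx : φ x ≤ 0 := by
    simpa [φ, h1, h1', hm1, hs1] using le_mul_exp_of_neg_mul_le_deriv
      (fun t ht => (hφ t ht).continuousWithinAt)
      (fun t ht => (hφ t (Ioo_subset_Icc_self ht)).mono Ioo_subset_Icc_self)
      (fun t ht => hineq t (Ioo_subset_Icc_self ht)) x hx
  have : z x ^ 2 ≤ 0 := by
    simp only [φ] at hφx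
    nlinarith [sq_nonneg (Dv z x), sq_nonneg (moment p z x), sq_nonneg (Dv (moment p z) x)]
  simpa using pow_eq_zero_iff (n := 2) two_ne_zero |>.1 (le_antisymm this (sq_nonneg _))

lemma moment_one_eq_zero_of_nonneg (hp : ∀ x ∈ Icc (0:ℝ) 1, 0 ≤ p x)
    (hr : ∀ x ∈ Icc (0:ℝ) 1, 0 ≤ r x) (hc : 0 ≤ c) (hlam : lam ≤ 0) (hz : SolT p r c lam z)
    (h0 : z 0 = 0) (h0' : Dv z 0 = 0) (h1 : z 1 = 0) (h1' : Dv z 1 = 0) :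
    moment p z 1 = 0 := by
  set F : ℝ → ℝ := fun t => Dv (moment p z) t * z t - moment p z t * Dv z t
    + lam * (z t * Dv z t)
  set G : ℝ → ℝ := fun t => lam * c * r t * z t ^ 2 + lam * Dv z t ^ 2
    - p t * Dv (Dv z) t ^ 2
  have hF : ∀ x ∈ Icc (0:ℝ) 1, HasDerivWithinAt F (G x) (Icc 0 1) x := fun x hx => by
    have hz₀ := hasDerivWithinAt_Dv_s14 hz.differentiableOn hx
    have hz₁ := hasDerivWithinAt_Dv_s14 hz.differentiableOn_Dv hx
    refine (((hz.hasDerivWithinAt_Dv_moment hx).fun_mul hz₀).fun_sub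
      ((hasDerivWithinAt_Dv_s14 hz.differentiableOn_moment hx).fun_mul hz₁)).fun_add
      ((hz₀.fun_mul hz₁).const_mul lam) |>.congr_deriv ?_
    simp only [G, moment]
    ring
  have hG : ∀ x ∈ Icc (0:ℝ) 1, G x ≤ 0 := fun x hx => by
    nlinarith [mul_nonneg (mul_nonneg hc (hr x hx)) (sq_nonneg (z x)),
      mul_nonneg (hp x hx) (sq_nonneg (Dv (Dv z) x)), sq_nonneg (Dv z x)]
  have hanti : AntitoneOn F (Icc 0 1) :=
    antitoneOn_of_hasDerivWithinAt_nonpos (convex_Icc 0 1)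
      (fun x hx => (hF x hx).continuousWithinAt)
      (fun x hx => (hF x (interior_subset hx)).mono interior_subset)
      (fun x hx => hG x (interior_subset hx))
  have h0m : (0:ℝ) ∈ Icc (0:ℝ) 1 := left_mem_Icc.2 zero_le_one
  have h1m : (1:ℝ) ∈ Icc (0:ℝ) 1 := right_mem_Icc.2 zero_le_one
  have hF0 : EqOn F 0 (Icc 0 1) := fun x hx => by
    have hF0 : F 0 = 0 := by simp [F, h0, h0']
    have hF1 : F 1 = 0 := by simp [F, h1, h1']
    have := hanti h0m hx hx.1
    have := hanti hx h1m hx.2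
    simp only [Pi.zero_apply]
    linarith
  have hG1 : G 1 = 0 := (uniqueDiffOn_Icc one_pos 1 h1m).eq_deriv _ (hF 1 h1m)
    ((hasDerivWithinAt_const 1 (Icc 0 1) 0).congr hF0 (hF0 h1m))
  have hsq : moment p z 1 ^ 2 = 0 := by
    simp only [G, h1, h1'] at hG1
    simp only [moment]
    linear_combination -p 1 * hG1
  exact pow_eq_zero_iff two_ne_zero |>.1 hsq

lemma pos_of_moment_pos (hp : ∀ x ∈ Icc (0:ℝ) 1, 0 ≤ p x) (hr : ∀ x ∈ Icc (0:ℝ) 1, 0 ≤ r x)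
    (hc : c ≤ 0) (hlam : lam ≤ 0) (hz : SolT p r c lam z)
    (h1 : z 1 = 0) (h1' : Dv z 1 = 0) (hs1 : Dv (moment p z) 1 = 0)
    {x₀ : ℝ} (hx₀ : x₀ ∈ Ico (0:ℝ) 1) (hpos : ∀ t ∈ Ioc x₀ 1, 0 < moment p z t) :
    0 < z x₀ ∧ moment p z 1 ≤ moment p z x₀ := by
  have hD : Icc x₀ 1 ⊆ Icc 0 1 := Icc_subset_Icc_left hx₀.1
  have hint : interior (Icc x₀ 1) = Ioo x₀ 1 := interior_Icc
  have hx₀D : x₀ ∈ Icc x₀ 1 := left_mem_Icc.2 hx₀.2.le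
  have h1D : (1:ℝ) ∈ Icc x₀ 1 := right_mem_Icc.2 hx₀.2.le
  have hz'' : ∀ t ∈ Ioo x₀ 1, 0 < Dv (Dv z) t := fun t ht =>
    pos_of_mul_pos_right (hpos t (Ioo_subset_Ioc_self ht)) (hp t (hD (Ioo_subset_Icc_self ht)))
  have hz'mono : StrictMonoOn (Dv z) (Icc x₀ 1) :=
    strictMonoOn_of_hasDerivWithinAt_pos (convex_Icc _ _)
      (hz.differentiableOn_Dv.continuousOn.mono hD)
      (hasDerivWithinAt_Dv_interior hz.differentiableOn_Dv hD) (by rwa [hint])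
  have hz' : ∀ t ∈ Ico x₀ 1, Dv z t < 0 := fun t ht =>
    h1' ▸ hz'mono (Ico_subset_Icc_self ht) h1D ht.2
  have hzanti : StrictAntiOn z (Icc x₀ 1) :=
    strictAntiOn_of_hasDerivWithinAt_neg (convex_Icc _ _)
      (hz.differentiableOn.continuousOn.mono hD)
      (hasDerivWithinAt_Dv_interior hz.differentiableOn hD)
      (by rw [hint]; exact fun t ht => hz' t (Ioo_subset_Ico_self ht))
  have hzpos : ∀ t ∈ Ico x₀ 1, 0 < z t := fun t ht =>
    h1 ▸ hzanti (Ico_subset_Icc_self ht) h1D ht.2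
  have hshear : MonotoneOn (Dv (moment p z)) (Icc x₀ 1) :=
    monotoneOn_of_hasDerivWithinAt_nonneg (convex_Icc _ _)
      (hz.differentiableOn_Dv_moment.continuousOn.mono hD)
      (hasDerivWithinAt_Dv_interior hz.differentiableOn_Dv_moment hD) <| by
    rw [hint]
    intro t ht
    have htm := hD (Ioo_subset_Icc_self ht)
    rw [hz.eqn htm]
    have := mul_nonpos_of_nonpos_of_nonneg (mul_nonpos_of_nonpos_of_nonneg hc (hr t htm))
      (hzpos t (Ioo_subset_Ico_self ht)).le
    exact mul_nonneg_of_nonpos_of_nonpos hlam (by linarith [hz'' t ht])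
  have hmoment : AntitoneOn (moment p z) (Icc x₀ 1) :=
    antitoneOn_of_hasDerivWithinAt_nonpos (convex_Icc _ _)
      (hz.differentiableOn_moment.continuousOn.mono hD)
      (hasDerivWithinAt_Dv_interior hz.differentiableOn_moment hD)
      (fun t ht => hs1 ▸ hshear (interior_subset ht) h1D (hint ▸ ht).2.le)
  exact ⟨hzpos x₀ ⟨le_rfl, hx₀.2⟩, hmoment hx₀D h1D hx₀.2.le⟩

lemma moment_one_nonpos (hp : ∀ x ∈ Icc (0:ℝ) 1, 0 ≤ p x) (hr : ∀ x ∈ Icc (0:ℝ) 1, 0 ≤ r x)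
    (hc : c ≤ 0) (hlam : lam ≤ 0) (hz : SolT p r c lam z)
    (h0 : z 0 = 0) (h1 : z 1 = 0) (h1' : Dv z 1 = 0) (hs1 : Dv (moment p z) 1 = 0) :
    moment p z 1 ≤ 0 := by
  by_contra! hpos1
  set T := Icc (0:ℝ) 1 ∩ moment p z ⁻¹' Iic 0
  rcases T.eq_empty_or_nonempty with hT | hT
  · have := (hz.pos_of_moment_pos hp hr hc hlam h1 h1' hs1 ⟨le_rfl, one_pos⟩ fun t ht =>
      lt_of_not_ge fun h => (eq_empty_iff_forall_notMem.1 hT t ⟨⟨ht.1.le, ht.2⟩, h⟩)).1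
    linarith
  · obtain ⟨x₁, hx₁T, hx₁max⟩ := (isCompact_Icc.of_isClosed_subset
      (hz.differentiableOn_moment.continuousOn.preimage_isClosed_of_isClosed isClosed_Icc
        isClosed_Iic) inter_subset_left).exists_isGreatest hT
    have hx₁1 : x₁ < 1 :=
      hx₁T.1.2.lt_of_ne fun h => (h ▸ hx₁T.2 : moment p z 1 ≤ 0).not_gt hpos1
    have := (hz.pos_of_moment_pos hp hr hc hlam h1 h1' hs1 ⟨hx₁T.1.1, hx₁1⟩ fun t ht =>
      lt_of_not_ge fun h => ht.1.not_ge (hx₁max ⟨⟨hx₁T.1.1.trans ht.1.le, ht.2⟩, h⟩)).2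
    have hx₁0 : moment p z x₁ ≤ 0 := hx₁T.2
    linarith

lemma moment_one_eq_zero (hp : ∀ x ∈ Icc (0:ℝ) 1, 0 ≤ p x) (hr : ∀ x ∈ Icc (0:ℝ) 1, 0 ≤ r x)
    (hlam : lam ≤ 0) (hz : SolT p r c lam z) (h0 : z 0 = 0) (h0' : Dv z 0 = 0)
    (h1 : z 1 = 0) (h1' : Dv z 1 = 0) (hs1 : Dv (moment p z) 1 = 0) :
    moment p z 1 = 0 := by
  rcases le_total 0 c with hc | hc
  · exact hz.moment_one_eq_zero_of_nonneg hp hr hc hlam h0 h0' h1 h1'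
  · have hneg := hz.neg.moment_one_nonpos hp hr hc hlam (by simp [h0]) (by simp [h1])
      (by simp [h1']) (by simp [hs1])
    simp only [moment_neg, neg_nonpos] at hneg
    exact le_antisymm (hz.moment_one_nonpos hp hr hc hlam h0 h1 h1' hs1) hneg

end SolT

lemma SolT.eqOn_zero_of_BC2 {p r : ℝ → ℝ} {c lam alpha : ℝ} {z : ℝ → ℝ}
    (hpc : ContinuousOn p (Icc 0 1)) (hrc : ContinuousOn r (Icc 0 1))
    (hp : ∀ x ∈ Icc (0:ℝ) 1, 0 < p x) (hr : ∀ x ∈ Icc (0:ℝ) 1, 0 < r x) (hlam : lam ≤ 0)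
    (hz : SolT p r c lam z) (hbc : BC2 p lam alpha z) (h1 : z 1 = 0) :
    EqOn z 0 (Icc 0 1) := by
  have hs1 : Dv (moment p z) 1 = 0 := by simpa [h1] using hbc.shear
  exact hz.eqOn_zero_of_vanishing_at_one hpc hrc (fun x hx => (hp x hx).ne') h1 hbc.2.2.1
    (hz.moment_one_eq_zero (fun x hx => (hp x hx).le) (fun x hx => (hr x hx).le) hlam
      hbc.1 hbc.2.1 h1 hbc.2.2.1 hs1) hs1

theorem stmt_14_general (p r : ℝ → ℝ) (c alpha lam : ℝ)
    (hpc : ContinuousOn p (Icc 0 1)) (hrc : ContinuousOn r (Icc 0 1))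
    (hp : ∀ x ∈ Icc (0:ℝ) 1, 0 < p x) (hr : ∀ x ∈ Icc (0:ℝ) 1, 0 < r x)
    (hlam : lam < 0) (y₁ y₂ : ℝ → ℝ)
    (hy₁ : SolT p r c lam y₁) (hbc₁ : BC2 p lam alpha y₁)
    (hy₂ : SolT p r c lam y₂) (hbc₂ : BC2 p lam alpha y₂) :
    LinDep y₁ y₂ := by
  by_cases h : y₁ 1 = 0
  · refine ⟨1, 0, Or.inl one_ne_zero, fun x hx => ?_⟩
    simpa using hy₁.eqOn_zero_of_BC2 hpc hrc hp hr hlam.le hbc₁ h hx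
  · refine ⟨y₂ 1, -y₁ 1, Or.inr (neg_ne_zero.2 h), fun x hx => ?_⟩
    exact (hy₁.linComb hy₂ _ _).eqOn_zero_of_BC2 hpc hrc hp hr hlam.le
      (hbc₁.linComb hbc₂ hy₁ hy₂ _ _) (by ring) hx

theorem stmt_14 (p r : ℝ → ℝ) (c alpha lam : ℝ)
    (hpc : ContinuousOn p (Icc 0 1)) (hrc : ContinuousOn r (Icc 0 1))
    (hp : ∀ x ∈ Icc (0:ℝ) 1, 0 < p x) (hr : ∀ x ∈ Icc (0:ℝ) 1, 0 < r x)
    (hlam : lam < 0) (y₁ y₂ : ℝ → ℝ)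
    (hy₁ : SolT p r c lam y₁) (hnt₁ : Nontriv y₁) (hbc₁ : BC2 p lam alpha y₁)
    (hy₂ : SolT p r c lam y₂) (hnt₂ : Nontriv y₂) (hbc₂ : BC2 p lam alpha y₂) :
    LinDep y₁ y₂ :=
  stmt_14_general p r c alpha lam hpc hrc hp hr hlam y₁ y₂ hy₁ hbc₁ hy₂ hbc₂
end
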